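/- Let (X, d_X) be a metric space satisfying the infrasup p-diamond inequality with constant C_D > 0 for some p ≥ 1. Then there exist C > 0 depending only on C_D and p, and N ∈ ℕ, such that for every n ≥ N and every map f: D_n^ω → X satisfying λ·d(x,y) ≤ d_X(f(x), f(y)) ≤ K·λ·d(x,y) for all vertices x,y of D_n^ω (for some λ > 0 and K ≥ 1), one has K ≥ C·n^{1/p}. -/

import Mathlib

/-- Index type for the edges of the `n`-th countably branching diamond `D_n^ω`. -/
def DEdge : ℕ → Type
  | 0 => Unit
  | n + 1 => DEdge n × ℕ × Bool

/-- Vertex set of the `n`-th countably branching diamond `D_n^ω`: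
`D_0` is a single edge with the two vertices `s, t`; `D_{n+1}` is obtained from `D_n` by
replacing every edge with a copy of `D_1^ω`, which adds a countable family of branch
vertices for each edge. -/
def DVert : ℕ → Type
  | 0 => Bool
  | n + 1 => DVert n ⊕ (DEdge n × ℕ)

/-- Endpoints (source, target) of an edge of `D_n^ω`. -/
def dEnds : (n : ℕ) → DEdge n → DVert n × DVert n
  | 0, _ => (false, true)
  | n + 1, (e, k, b) =>
      if b then (Sum.inr (e, k), Sum.inl (dEnds n e).2)
      else (Sum.inl (dEnds n e).1, Sum.inr (e, k))

/-- The graph `D_n^ω`. -/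
def diamondGraph (n : ℕ) : SimpleGraph (DVert n) :=
  SimpleGraph.fromRel (fun u v => ∃ e : DEdge n, dEnds n e = (u, v))

/-- The distinguished vertex `s` of `D_n^ω`. -/
def sVert : (n : ℕ) → DVert n
  | 0 => false
  | n + 1 => Sum.inl (sVert n)

/-- The distinguished vertex `t` of `D_n^ω`. -/
def tVert : (n : ℕ) → DVert n
  | 0 => true
  | n + 1 => Sum.inl (tVert n)

open scoped ENNReal

/-- A metric space `(X,d)` satisfies the infrasup `p`-diamond inequality with constant
`C_D > 0` if for all `s, t ∈ X` and every sequence `(x_n)` in `X`: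
`d(s,t)^p/2^p + (1/C_D^p)·inf_{i≠j} d(x_i,x_j)^p
  ≤ max { sup_i d(s,x_i)^p , sup_i d(t,x_i)^p }`. -/
def InfrasupDiamond (X : Type*) [PseudoMetricSpace X] (p C_D : ℝ) : Prop :=
  ∀ (s t : X) (x : ℕ → X),
    edist s t ^ p / (2 : ℝ≥0∞) ^ p
      + (1 / ENNReal.ofReal C_D ^ p) * (⨅ (i : ℕ) (j : ℕ) (_ : i ≠ j), edist (x i) (x j) ^ p)
      ≤ max (⨆ i : ℕ, edist s (x i) ^ p) (⨆ i : ℕ, edist t (x i) ^ p)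

instance dEdgeNonempty : ∀ n, Nonempty (DEdge n)
  | 0 => ⟨()⟩
  | n + 1 => (dEdgeNonempty n).elim fun e => ⟨(e, 0, false)⟩

instance dVertNonempty (n : ℕ) : Nonempty (DVert n) :=
  ⟨sVert n⟩

lemma dEnds_ne : ∀ (n : ℕ) (e : DEdge n), (dEnds n e).1 ≠ (dEnds n e).2
  | 0, _ => by simp [dEnds]; exact Bool.false_ne_true
  | n + 1, (e, k, b) => by cases b <;> simp [dEnds] <;> intro h <;> cases h

lemma adj_dEnds (n : ℕ) (e : DEdge n) :
    (diamondGraph n).Adj (dEnds n e).1 (dEnds n e).2 := by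
  rw [diamondGraph, SimpleGraph.fromRel_adj]
  exact ⟨dEnds_ne n e, Or.inl ⟨e, rfl⟩⟩

lemma adj_succ_cases {n : ℕ} {a b : DVert (n + 1)}
    (h : (diamondGraph (n + 1)).Adj a b) :
    ∃ (e : DEdge n) (i : ℕ),
      ((a = Sum.inl (dEnds n e).1 ∨ a = Sum.inl (dEnds n e).2) ∧ b = Sum.inr (e, i)) ∨
      ((b = Sum.inl (dEnds n e).1 ∨ b = Sum.inl (dEnds n e).2) ∧ a = Sum.inr (e, i)) := by
  rw [diamondGraph, SimpleGraph.fromRel_adj] at h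
  obtain ⟨-, h | h⟩ := h
  · obtain ⟨⟨e, i, bb⟩, he⟩ := h
    cases bb <;> simp only [dEnds, if_true, if_false, Bool.false_eq_true, Prod.mk.injEq] at he
    · exact ⟨e, i, Or.inl ⟨Or.inl (Prod.mk.inj he).1.symm, (Prod.mk.inj he).2.symm⟩⟩
    · exact ⟨e, i, Or.inr ⟨Or.inr (Prod.mk.inj he).2.symm, (Prod.mk.inj he).1.symm⟩⟩
  · obtain ⟨⟨e, i, bb⟩, he⟩ := h
    cases bb <;> simp only [dEnds, if_true, if_false, Bool.false_eq_true, Prod.mk.injEq] at he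
    · exact ⟨e, i, Or.inr ⟨Or.inl (Prod.mk.inj he).1.symm, (Prod.mk.inj he).2.symm⟩⟩
    · exact ⟨e, i, Or.inl ⟨Or.inr (Prod.mk.inj he).2.symm, (Prod.mk.inj he).1.symm⟩⟩

lemma adj_mid_left {n : ℕ} (e : DEdge n) (i : ℕ) :
    (diamondGraph (n + 1)).Adj (Sum.inl (dEnds n e).1) (Sum.inr (e, i)) := by
  refine (SimpleGraph.fromRel_adj _ _ _).mpr ?_
  exact ⟨Sum.inl_ne_inr, Or.inl ⟨(e, i, false), rfl⟩⟩

lemma adj_mid_right {n : ℕ} (e : DEdge n) (i : ℕ) :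
    (diamondGraph (n + 1)).Adj (Sum.inr (e, i)) (Sum.inl (dEnds n e).2) := by
  refine (SimpleGraph.fromRel_adj _ _ _).mpr ?_
  exact ⟨Sum.inr_ne_inl, Or.inl ⟨(e, i, true), rfl⟩⟩

lemma reach_inl {n : ℕ} {u v : DVert n} (h : (diamondGraph n).Reachable u v) :
    (diamondGraph (n + 1)).Reachable (Sum.inl u) (Sum.inl v) := by
  obtain ⟨W⟩ := h
  induction W with
  | nil => exact SimpleGraph.Reachable.refl _
  | @cons a w c h W ih =>
    refine SimpleGraph.Reachable.trans ?_ ih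
    rw [diamondGraph, SimpleGraph.fromRel_adj] at h
    obtain ⟨-, ⟨e, he⟩ | ⟨e, he⟩⟩ := h
    · have h1 := adj_mid_left e 0
      have h2 := adj_mid_right e 0
      rw [he] at h1 h2
      exact h1.reachable.trans h2.reachable
    · have h1 := adj_mid_left e 0
      have h2 := adj_mid_right e 0
      rw [he] at h1 h2
      exact h2.reachable.symm.trans h1.reachable.symm

lemma diamond_preconnected : ∀ n, (diamondGraph n).Preconnected := by
  intro n
  induction n with
  | zero =>
    intro a b
    have hadj : (diamondGraph 0).Adj false true := by
      refine (SimpleGraph.fromRel_adj _ _ _).mpr ?_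
      exact ⟨Bool.false_ne_true, Or.inl ⟨(), rfl⟩⟩
    cases a <;> cases b
    · exact SimpleGraph.Reachable.refl _
    · exact hadj.reachable
    · exact hadj.reachable.symm
    · exact SimpleGraph.Reachable.refl _
  | succ n ih =>
    have key : ∀ a : DVert (n + 1), ∃ u : DVert n,
        (diamondGraph (n + 1)).Reachable a (Sum.inl u) := by
      rintro (u | ⟨e, i⟩)
      · exact ⟨u, SimpleGraph.Reachable.refl _⟩
      · exact ⟨(dEnds n e).1, (adj_mid_left e i).reachable.symm⟩
    intro a b
    obtain ⟨ua, ha⟩ := key a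
    obtain ⟨ub, hb⟩ := key b
    exact ha.trans ((reach_inl (ih ua ub)).trans hb.symm)

lemma diamond_connected (n : ℕ) : (diamondGraph n).Connected :=
  ⟨diamond_preconnected n⟩

lemma dist_ends_le_one {n : ℕ} (e : DEdge n) :
    (diamondGraph n).dist (dEnds n e).1 (dEnds n e).2 ≤ 1 := by
  simpa using SimpleGraph.dist_le ((adj_dEnds n e).toWalk)

lemma two_le_dist_inr_inr {n : ℕ} (e : DEdge n) {i j : ℕ} (hij : i ≠ j) :
    2 ≤ (diamondGraph (n + 1)).dist (Sum.inr (e, i) : DVert (n + 1)) (Sum.inr (e, j)) := by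
  have hne : (Sum.inr (e, i) : DVert (n + 1)) ≠ Sum.inr (e, j) := by
    simp [hij]
  have h0 : 0 < (diamondGraph (n + 1)).dist (Sum.inr (e, i) : DVert (n + 1)) (Sum.inr (e, j)) :=
    (diamond_preconnected (n + 1) _ _).pos_dist_of_ne hne
  have h1 : (diamondGraph (n + 1)).dist (Sum.inr (e, i) : DVert (n + 1)) (Sum.inr (e, j)) ≠ 1 := by
    intro h
    have hadj := SimpleGraph.dist_eq_one_iff_adj.mp h
    obtain ⟨e', i', hc | hc⟩ := adj_succ_cases hadj
    · rcases hc.1 with h' | h' <;> simp at h'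
    · rcases hc.1 with h' | h' <;> simp at h'
  omega

lemma walk_main {n : ℕ} (v : DVert n) :
    ∀ {a b : DVert (n + 1)} (W : (diamondGraph (n + 1)).Walk a b), b = Sum.inl v →
      (∀ u, a = Sum.inl u → 2 * (diamondGraph n).dist u v ≤ W.length) ∧
      (∀ (e : DEdge n) (i : ℕ), a = Sum.inr (e, i) →
        ∀ u, u = (dEnds n e).1 ∨ u = (dEnds n e).2 →
          2 * (diamondGraph n).dist u v ≤ W.length + 1) := by
  intro a b W
  induction W with
  | nil =>
    rintro rfl
    constructor
    · rintro u hu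
      obtain rfl : v = u := Sum.inl.inj hu
      simp
    · rintro e i hu
      exact absurd hu (by simp)
  | @cons a w c h W ih =>
    rintro rfl
    have ih := ih rfl
    constructor
    · rintro u rfl
      obtain ⟨e, i, ⟨hmem, rfl⟩ | ⟨hmem, hbad⟩⟩ := adj_succ_cases h
      · have hmem' : u = (dEnds n e).1 ∨ u = (dEnds n e).2 := by
          rcases hmem with h' | h'
          · exact Or.inl (Sum.inl.inj h')
          · exact Or.inr (Sum.inl.inj h')
        have := ih.2 e i rfl u hmem'
        exact this
      · simp at hbad
    · rintro e i rfl u hmem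
      obtain ⟨e', i', ⟨hmem', -⟩ | ⟨hmem', heq⟩⟩ := adj_succ_cases h
      · rcases hmem' with h' | h' <;> simp at h'
      · have he : e = e' := congrArg Prod.fst (Sum.inr.inj heq)
        rw [← he] at hmem'
        obtain ⟨u₂, rfl, hmem₂⟩ : ∃ u₂, w = Sum.inl u₂ ∧
            (u₂ = (dEnds n e).1 ∨ u₂ = (dEnds n e).2) := by
          rcases hmem' with h' | h'
          · exact ⟨_, h', Or.inl rfl⟩
          · exact ⟨_, h', Or.inr rfl⟩
        have hW := ih.1 u₂ rfl
        have htri : (diamondGraph n).dist u v ≤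
            (diamondGraph n).dist u u₂ + (diamondGraph n).dist u₂ v :=
          (diamond_connected n).dist_triangle
        have hd1 : (diamondGraph n).dist u u₂ ≤ 1 := by
          rcases hmem with rfl | rfl <;> rcases hmem₂ with rfl | rfl
          · simp [SimpleGraph.dist_self]
          · exact dist_ends_le_one e
          · rw [SimpleGraph.dist_comm]; exact dist_ends_le_one e
          · simp [SimpleGraph.dist_self]
        change _ ≤ W.length + 1 + 1
        omega

lemma dist_inl_inl {n : ℕ} (u v : DVert n) :
    2 * (diamondGraph n).dist u v ≤
      (diamondGraph (n + 1)).dist (Sum.inl u : DVert (n + 1)) (Sum.inl v) := by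
  obtain ⟨W, hW⟩ :=
    (diamond_preconnected (n + 1) (Sum.inl u : DVert (n + 1)) (Sum.inl v)).exists_walk_length_eq_dist
  rw [← hW]
  exact (walk_main v W rfl).1 u rfl

lemma diamond_combine {B S E CC lp c2 : ℝ≥0∞} (n : ℕ) (hc2 : 1 ≤ c2)
    (hIH : B + (n : ℝ≥0∞) * CC * (c2 * lp) * c2 ^ n ≤ c2 ^ n * S)
    (hsup : S + CC * (c2 * lp) * c2 ≤ E * c2) :
    B + ((n + 1 : ℕ) : ℝ≥0∞) * CC * lp * c2 ^ (n + 1) ≤ c2 ^ (n + 1) * E := by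
  have h1 : (S + CC * (c2 * lp) * c2) * c2 ^ n ≤ E * c2 * c2 ^ n :=
    mul_le_mul_left hsup _
  have key : CC * lp * c2 * c2 ^ n ≤ CC * (c2 * lp) * c2 * c2 ^ n := by
    refine mul_le_mul_left ?_ _
    calc CC * lp * c2 = CC * lp * c2 * 1 := (mul_one _).symm
      _ ≤ CC * lp * c2 * c2 := mul_le_mul_right hc2 _
      _ = CC * (c2 * lp) * c2 := by ring
  calc B + ((n + 1 : ℕ) : ℝ≥0∞) * CC * lp * c2 ^ (n + 1)
      = (B + (n : ℝ≥0∞) * CC * (c2 * lp) * c2 ^ n) + CC * lp * c2 * c2 ^ n := by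
        push_cast; ring
    _ ≤ c2 ^ n * S + CC * (c2 * lp) * c2 * c2 ^ n := add_le_add hIH key
    _ = (S + CC * (c2 * lp) * c2) * c2 ^ n := by ring
    _ ≤ E * c2 * c2 ^ n := h1
    _ = c2 ^ (n + 1) * E := by ring

lemma diamond_main.{v} (p C_D : ℝ) (hp0 : 0 ≤ p) :
    ∀ (n : ℕ) (X : Type v) [MetricSpace X], InfrasupDiamond X p C_D →
      ∀ (f : DVert n → X) (lam : ℝ≥0∞),
        (∀ a b : DVert n, lam * ((diamondGraph n).dist a b : ℝ≥0∞) ≤ edist (f a) (f b)) →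
        edist (f (sVert n)) (f (tVert n)) ^ p
            + (n : ℝ≥0∞) * (1 / ENNReal.ofReal C_D ^ p) * lam ^ p * ((2 : ℝ≥0∞) ^ p) ^ n
          ≤ ((2 : ℝ≥0∞) ^ p) ^ n
              * ⨆ e : DEdge n, edist (f (dEnds n e).1) (f (dEnds n e).2) ^ p := by
  intro n
  induction n with
  | zero =>
    intro X _ hX f lam hlow
    simp only [Nat.cast_zero, zero_mul, add_zero, pow_zero, one_mul]
    exact le_iSup_of_le (Unit.unit : DEdge 0) le_rfl
  | succ n ih =>
    intro X _ hX f lam hlow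
    have hc2_ne0 : ((2 : ℝ≥0∞) ^ p) ≠ 0 := (ENNReal.rpow_pos (by norm_num) (by norm_num)).ne'
    have hc2_net : ((2 : ℝ≥0∞) ^ p) ≠ ⊤ := ENNReal.rpow_ne_top_of_nonneg hp0 (by norm_num)
    have hc2_ge1 : (1 : ℝ≥0∞) ≤ (2 : ℝ≥0∞) ^ p := by
      calc (1 : ℝ≥0∞) = 1 ^ p := (ENNReal.one_rpow p).symm
        _ ≤ 2 ^ p := ENNReal.rpow_le_rpow (by norm_num) hp0
    have h2l : ((2 : ℝ≥0∞) * lam) ^ p = (2 : ℝ≥0∞) ^ p * lam ^ p :=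
      ENNReal.mul_rpow_of_nonneg 2 lam hp0
    -- lower Lipschitz bound for the restriction to the inner copy
    have hlow' : ∀ a b : DVert n,
        ((2 : ℝ≥0∞) * lam) * ((diamondGraph n).dist a b : ℝ≥0∞)
          ≤ edist (f (Sum.inl a)) (f (Sum.inl b)) := by
      intro a b
      calc ((2 : ℝ≥0∞) * lam) * ((diamondGraph n).dist a b : ℝ≥0∞)
          = lam * ((2 * (diamondGraph n).dist a b : ℕ) : ℝ≥0∞) := by push_cast; ring
        _ ≤ lam * (((diamondGraph (n + 1)).dist (Sum.inl a) (Sum.inl b) : ℕ) : ℝ≥0∞) :=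
            mul_le_mul_right (Nat.cast_le.mpr (dist_inl_inl a b)) lam
        _ ≤ edist (f (Sum.inl a)) (f (Sum.inl b)) := hlow _ _
    have IH := ih X hX (fun v => f (Sum.inl v)) ((2 : ℝ≥0∞) * lam) hlow'
    rw [h2l] at IH
    -- per-edge inequality from the infrasup diamond inequality
    have per : ∀ e : DEdge n,
        edist (f (Sum.inl (dEnds n e).1)) (f (Sum.inl (dEnds n e).2)) ^ p
            + (1 / ENNReal.ofReal C_D ^ p) * ((2 : ℝ≥0∞) ^ p * lam ^ p) * ((2 : ℝ≥0∞) ^ p)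
          ≤ (⨆ e' : DEdge (n + 1),
              edist (f (dEnds (n + 1) e').1) (f (dEnds (n + 1) e').2) ^ p) * ((2 : ℝ≥0∞) ^ p) := by
      intro e
      have hineq := hX (f (Sum.inl (dEnds n e).1)) (f (Sum.inl (dEnds n e).2))
        (fun i => f (Sum.inr (e, i)))
      have hinf : (2 : ℝ≥0∞) ^ p * lam ^ p ≤ ⨅ (i : ℕ) (j : ℕ) (_ : i ≠ j),
          edist (f (Sum.inr (e, i))) (f (Sum.inr (e, j))) ^ p := by
        refine le_iInf fun i => le_iInf fun j => le_iInf fun hij => ?_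
        have hd : (2 : ℝ≥0∞) * lam ≤ edist (f (Sum.inr (e, i))) (f (Sum.inr (e, j))) := by
          calc (2 : ℝ≥0∞) * lam = lam * ((2 : ℕ) : ℝ≥0∞) := by push_cast; ring
            _ ≤ lam * (((diamondGraph (n + 1)).dist (Sum.inr (e, i)) (Sum.inr (e, j)) : ℕ)
                  : ℝ≥0∞) :=
                mul_le_mul_right (Nat.cast_le.mpr (two_le_dist_inr_inr e hij)) lam
            _ ≤ edist (f (Sum.inr (e, i))) (f (Sum.inr (e, j))) := hlow _ _
        calc (2 : ℝ≥0∞) ^ p * lam ^ p = ((2 : ℝ≥0∞) * lam) ^ p := h2l.symm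
          _ ≤ edist (f (Sum.inr (e, i))) (f (Sum.inr (e, j))) ^ p :=
              ENNReal.rpow_le_rpow hd hp0
      have hs1 : (⨆ i : ℕ, edist (f (Sum.inl (dEnds n e).1)) (f (Sum.inr (e, i))) ^ p)
          ≤ ⨆ e' : DEdge (n + 1),
              edist (f (dEnds (n + 1) e').1) (f (dEnds (n + 1) e').2) ^ p :=
        iSup_le fun i => le_iSup_of_le ((e, i, false) : DEdge (n + 1)) le_rfl
      have hs2 : (⨆ i : ℕ, edist (f (Sum.inl (dEnds n e).2)) (f (Sum.inr (e, i))) ^ p)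
          ≤ ⨆ e' : DEdge (n + 1),
              edist (f (dEnds (n + 1) e').1) (f (dEnds (n + 1) e').2) ^ p :=
        iSup_le fun i => le_iSup_of_le ((e, i, true) : DEdge (n + 1))
          (le_of_eq (by simp only [dEnds, if_true]; rw [edist_comm]))
      have hA : edist (f (Sum.inl (dEnds n e).1)) (f (Sum.inl (dEnds n e).2)) ^ p
            / ((2 : ℝ≥0∞) ^ p)
          + (1 / ENNReal.ofReal C_D ^ p) * ((2 : ℝ≥0∞) ^ p * lam ^ p)
          ≤ ⨆ e' : DEdge (n + 1),
              edist (f (dEnds (n + 1) e').1) (f (dEnds (n + 1) e').2) ^ p := by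
        refine le_trans (le_trans ?_ hineq) (max_le hs1 hs2)
        exact add_le_add_right (mul_le_mul_right hinf _) _
      have hA' := mul_le_mul_left hA ((2 : ℝ≥0∞) ^ p)
      rwa [add_mul, ENNReal.div_mul_cancel hc2_ne0 hc2_net] at hA'
    have hsup : (⨆ e : DEdge n,
          edist (f (Sum.inl (dEnds n e).1)) (f (Sum.inl (dEnds n e).2)) ^ p)
          + (1 / ENNReal.ofReal C_D ^ p) * ((2 : ℝ≥0∞) ^ p * lam ^ p) * ((2 : ℝ≥0∞) ^ p)
        ≤ (⨆ e' : DEdge (n + 1),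
            edist (f (dEnds (n + 1) e').1) (f (dEnds (n + 1) e').2) ^ p) * ((2 : ℝ≥0∞) ^ p) := by
      rw [ENNReal.iSup_add]
      exact iSup_le per
    exact diamond_combine n hc2_ge1 IH hsup

/-- **Metric Diamond Inequality Embedding Obstruction.**
If `(X, d_X)` satisfies the infrasup `p`-diamond inequality with constant `C_D > 0` for some
`p ≥ 1`, then there are `C > 0` (depending only on `C_D` and `p`) and `N ∈ ℕ` such that any
bi-Lipschitz embedding of `D_n^ω` (with the shortest path metric) into `X`, for `n ≥ N`,
with scaling `λ > 0` and constant `K ≥ 1`, satisfies `K ≥ C·n^{1/p}`. -/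
theorem metric_diamond_embedding_obstruction.{u} (p C_D : ℝ) (hp : 1 ≤ p) (hCD : 0 < C_D) :
    ∃ C > (0 : ℝ), ∃ N : ℕ,
      ∀ (X : Type u) [MetricSpace X], InfrasupDiamond X p C_D →
        ∀ n : ℕ, N ≤ n → ∀ f : DVert n → X, ∀ lam K : ℝ, 0 < lam → 1 ≤ K →
          (∀ x y : DVert n,
            lam * ((diamondGraph n).dist x y : ℝ) ≤ dist (f x) (f y) ∧
            dist (f x) (f y) ≤ K * lam * ((diamondGraph n).dist x y : ℝ)) →
          C * (n : ℝ) ^ (1 / p) ≤ K := by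
  have hp0 : (0 : ℝ) ≤ p := by linarith
  have hp_pos : (0 : ℝ) < p := by linarith
  refine ⟨1 / C_D, by positivity, 0, ?_⟩
  intro X _ hX n _ f lam K hlam hK hf
  set lam₀ : ℝ≥0∞ := ENNReal.ofReal lam with hlam₀
  have hlam₀0 : lam₀ ≠ 0 := (ENNReal.ofReal_pos.mpr hlam).ne'
  have hlam₀t : lam₀ ≠ ⊤ := ENNReal.ofReal_ne_top
  have hLOW : ∀ a b : DVert n,
      lam₀ * ((diamondGraph n).dist a b : ℝ≥0∞) ≤ edist (f a) (f b) := by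
    intro a b
    calc lam₀ * ((diamondGraph n).dist a b : ℝ≥0∞)
        = ENNReal.ofReal (lam * ((diamondGraph n).dist a b : ℝ)) := by
          rw [ENNReal.ofReal_mul hlam.le, ENNReal.ofReal_natCast]
      _ ≤ ENNReal.ofReal (dist (f a) (f b)) := ENNReal.ofReal_le_ofReal (hf a b).1
      _ = edist (f a) (f b) := (edist_dist _ _).symm
  have MAIN := diamond_main p C_D hp0 n X hX f lam₀ hLOW
  have h1 : (n : ℝ≥0∞) * (1 / ENNReal.ofReal C_D ^ p) * lam₀ ^ p * ((2 : ℝ≥0∞) ^ p) ^ n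
      ≤ ((2 : ℝ≥0∞) ^ p) ^ n
          * ⨆ e : DEdge n, edist (f (dEnds n e).1) (f (dEnds n e).2) ^ p :=
    le_trans le_add_self MAIN
  have hE : (⨆ e : DEdge n, edist (f (dEnds n e).1) (f (dEnds n e).2) ^ p)
      ≤ ENNReal.ofReal (K * lam) ^ p := by
    refine iSup_le fun e => ENNReal.rpow_le_rpow ?_ hp0
    have hd : ((diamondGraph n).dist (dEnds n e).1 (dEnds n e).2 : ℝ) ≤ 1 := by
      exact_mod_cast dist_ends_le_one e
    have hKlam : (0 : ℝ) ≤ K * lam := by positivity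
    have hdd : dist (f (dEnds n e).1) (f (dEnds n e).2) ≤ K * lam := by
      refine le_trans (hf _ _).2 ?_
      calc K * lam * ((diamondGraph n).dist (dEnds n e).1 (dEnds n e).2 : ℝ)
          ≤ K * lam * 1 := mul_le_mul_of_nonneg_left hd hKlam
        _ = K * lam := mul_one _
    rw [edist_dist]
    exact ENNReal.ofReal_le_ofReal hdd
  have hc2_ne0 : (((2 : ℝ≥0∞) ^ p) ^ n) ≠ 0 :=
    pow_ne_zero n (ENNReal.rpow_pos (by norm_num) (by norm_num)).ne'
  have hc2_net : (((2 : ℝ≥0∞) ^ p) ^ n) ≠ ⊤ :=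
    ENNReal.pow_ne_top (ENNReal.rpow_ne_top_of_nonneg hp0 (by norm_num))
  have h2 : (n : ℝ≥0∞) * (1 / ENNReal.ofReal C_D ^ p) * lam₀ ^ p
      ≤ ENNReal.ofReal (K * lam) ^ p := by
    have h1' : ((2 : ℝ≥0∞) ^ p) ^ n * ((n : ℝ≥0∞) * (1 / ENNReal.ofReal C_D ^ p) * lam₀ ^ p)
        ≤ ((2 : ℝ≥0∞) ^ p) ^ n * ENNReal.ofReal (K * lam) ^ p := by
      refine le_trans ?_ (le_trans h1 (mul_le_mul_right hE _))
      rw [mul_comm]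
    exact (ENNReal.mul_le_mul_iff_right hc2_ne0 hc2_net).mp h1'
  have hKl : ENNReal.ofReal (K * lam) ^ p = ENNReal.ofReal K ^ p * lam₀ ^ p := by
    rw [ENNReal.ofReal_mul (by linarith : (0:ℝ) ≤ K), ENNReal.mul_rpow_of_nonneg _ _ hp0]
  have hlp_ne0 : lam₀ ^ p ≠ 0 := (ENNReal.rpow_pos (hlam₀0.bot_lt) hlam₀t).ne'
  have hlp_net : lam₀ ^ p ≠ ⊤ := ENNReal.rpow_ne_top_of_nonneg hp0 hlam₀t
  have h3 : (n : ℝ≥0∞) * (1 / ENNReal.ofReal C_D ^ p) ≤ ENNReal.ofReal K ^ p := by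
    rw [hKl] at h2
    exact (ENNReal.mul_le_mul_iff_left hlp_ne0 hlp_net).mp h2
  have hCD0 : (ENNReal.ofReal C_D ^ p) ≠ 0 :=
    (ENNReal.rpow_pos (ENNReal.ofReal_pos.mpr hCD) ENNReal.ofReal_ne_top).ne'
  have hCDt : (ENNReal.ofReal C_D ^ p) ≠ ⊤ :=
    ENNReal.rpow_ne_top_of_nonneg hp0 ENNReal.ofReal_ne_top
  have h4 : (n : ℝ≥0∞) ≤ ENNReal.ofReal K ^ p * ENNReal.ofReal C_D ^ p := by
    rw [mul_one_div] at h3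
    exact (ENNReal.div_le_iff hCD0 hCDt).mp h3
  have h5 : (n : ℝ≥0∞) ≤ ENNReal.ofReal ((K * C_D) ^ p) := by
    rw [← ENNReal.ofReal_rpow_of_nonneg (by positivity) hp0,
      ENNReal.ofReal_mul (by linarith : (0:ℝ) ≤ K), ENNReal.mul_rpow_of_nonneg _ _ hp0]
    exact h4
  have h6 : (n : ℝ) ≤ (K * C_D) ^ p := by
    rw [← ENNReal.ofReal_natCast n] at h5
    exact (ENNReal.ofReal_le_ofReal_iff (by positivity)).mp h5
  have h7 : (n : ℝ) ^ (1 / p) ≤ K * C_D := by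
    have := Real.rpow_le_rpow (Nat.cast_nonneg n) h6 (by positivity : (0:ℝ) ≤ 1 / p)
    rwa [← Real.rpow_mul (by positivity : (0:ℝ) ≤ K * C_D), mul_one_div,
      div_self hp_pos.ne', Real.rpow_one] at this
  rw [one_div_mul_eq_div, div_le_iff₀ hCD]
  exact h7
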